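/- arXiv:1312.6412 — 2 statements merged into one kernel-verified Lean document; each statement's English description precedes it below -/
import Mathlib

section
/- For every j ∈ {1,2}, every natural number m with 0 ≤ m ≤ k, and every a ∈ I_{kΛ₀}, one has a · x_{α_j}(−1)^m ∈ I_{kΛ₀} + U(𝔫̄)·x_{α₁+α₂}(−1). -/
/- Setup: the nilpotent subalgebra 𝔫 ⊂ 𝔰𝔩(3,ℂ) spanned by E₁₂, E₂₃, E₁₃, its loop
algebra 𝔫̄ = 𝔫 ⊗ ℂ[t,t⁻¹], and the universal enveloping algebra U(𝔫̄). -/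

noncomputable section
open scoped TensorProduct

attribute [local instance 100] LieRing.ofAssociativeRing

namespace PrincipalSubspaceSL3

/-- 3×3 complex matrices. -/
abbrev gl3 : Type := Matrix (Fin 3) (Fin 3) ℂ

/-- The root vectors: `Egen 0 = x_{α₁} = E₁₂`, `Egen 1 = x_{α₂} = E₂₃`,
`Egen 2 = x_{α₁+α₂} = E₁₃`. -/
def Egen : Fin 3 → gl3
  | 0 => Matrix.single 0 1 1
  | 1 => Matrix.single 1 2 1
  | 2 => Matrix.single 0 2 1

lemma egen_lie_mem :
    ∀ x ∈ Submodule.span ℂ (Set.range Egen), ∀ y ∈ Submodule.span ℂ (Set.range Egen),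
      ⁅x, y⁆ ∈ Submodule.span ℂ (Set.range Egen) := by
  have key : ∀ a b : Fin 3, ⁅Egen a, Egen b⁆ ∈ Submodule.span ℂ (Set.range Egen) := by
    intro a b
    fin_cases a <;> fin_cases b <;>
      simp only [Egen, Ring.lie_def, Matrix.single_mul_single_same,
        Matrix.single_mul_single_of_ne, Fin.reduceEq, ne_eq, not_false_eq_true,
        one_mul, sub_zero, zero_sub, sub_self] <;>
      first
        | exact Submodule.zero_mem _
        | exact Submodule.subset_span ⟨2, rfl⟩
        | exact Submodule.neg_mem _ (Submodule.subset_span ⟨2, rfl⟩)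
  intro x hx
  induction hx using Submodule.span_induction with
  | mem x hxs =>
      obtain ⟨a, rfl⟩ := hxs
      intro y hy
      induction hy using Submodule.span_induction with
      | mem y hys => obtain ⟨b, rfl⟩ := hys; exact key a b
      | zero => simp
      | add y z hy hz hy' hz' => rw [lie_add]; exact Submodule.add_mem _ hy' hz'
      | smul c y hy hy' => rw [lie_smul]; exact Submodule.smul_mem _ _ hy'
  | zero => intro y hy; simp
  | add x z hx hz hx' hz' =>
      intro y hy; rw [add_lie]; exact Submodule.add_mem _ (hx' y hy) (hz' y hy)
  | smul c x hx hx' =>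
      intro y hy; rw [smul_lie]; exact Submodule.smul_mem _ _ (hx' y hy)

/-- The nilpotent Lie subalgebra 𝔫 = ℂE₁₂ ⊕ ℂE₂₃ ⊕ ℂE₁₃ of 𝔰𝔩(3,ℂ). -/
def nn : LieSubalgebra ℂ gl3 :=
  { Submodule.span ℂ (Set.range Egen) with
    lie_mem' := fun {x y} hx hy => egen_lie_mem x hx y hy }

/-- Laurent polynomials ℂ[t, t⁻¹]. -/
abbrev A : Type := LaurentPolynomial ℂ

/-- The loop algebra 𝔫̄ = 𝔫 ⊗ ℂ[t,t⁻¹]. -/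
abbrev nbar : Type := A ⊗[ℂ] nn

set_option synthInstance.maxHeartbeats 1000000 in
instance : LieAlgebra ℂ nbar where
  lie_smul c x y := by
    have h := lie_smul (algebraMap ℂ A c) x y
    rwa [algebraMap_smul, algebraMap_smul] at h

/-- The root vectors as elements of 𝔫. -/
def en (i : Fin 3) : nn := ⟨Egen i, Submodule.subset_span ⟨i, rfl⟩⟩

/-- `nx i m` is the element x_{α}(m) = x_α ⊗ tᵐ of 𝔫̄, where α is α₁, α₂, α₁+α₂
according to i = 0, 1, 2. -/
def nx (i : Fin 3) (m : ℤ) : nbar := LaurentPolynomial.T m ⊗ₜ[ℂ] en i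

/-- The universal enveloping algebra U(𝔫̄). -/
abbrev U : Type := UniversalEnvelopingAlgebra ℂ nbar

/-- `xg i m` is the element x_α(m) regarded inside U(𝔫̄). -/
def xg (i : Fin 3) (m : ℤ) : U := UniversalEnvelopingAlgebra.ι ℂ (nx i m)

/-- `Rtr k i t` = R^i_{-1,t} : the sum of x_{α_i}(m₁)⋯x_{α_i}(m_{k+1}) over all integer
tuples with every m_j ≤ -1 and m₁+⋯+m_{k+1} = -t (parametrized by m_j = -1 - n_j with
n : Fin (k+1) → ℕ, ∑ n = t - (k+1)).  Here i : Fin 2 refers to the simple root α_{i+1}. -/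
def Rtr (k : ℕ) (i : Fin 2) (t : ℤ) : U :=
  ∑ f ∈ Finset.Nat.antidiagonalTuple (k + 1) (t - (k + 1)).toNat,
    (List.ofFn fun j : Fin (k + 1) => xg i.castSucc (-1 - (f j : ℤ))).prod

/-- The left ideal J = Σ_{i,t≥k+1} U(𝔫̄)·R^i_{-1,t}. -/
def Jid (k : ℕ) : Submodule U U :=
  Submodule.span U {u : U | ∃ i : Fin 2, ∃ t : ℤ, (k : ℤ) + 1 ≤ t ∧ u = Rtr k i t}

/-- The left ideal U(𝔫̄)·𝔫̄₊, generated by the x_α(m) with m ≥ 0. -/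
def nplusIdeal : Submodule U U :=
  Submodule.span U {u : U | ∃ i : Fin 3, ∃ m : ℤ, 0 ≤ m ∧ u = xg i m}

/-- The left ideal I_{kΛ₀} = J + U(𝔫̄)·𝔫̄₊. -/
def IkL0 (k : ℕ) : Submodule U U := Jid k ⊔ nplusIdeal

/-- The left ideal I_{k₀Λ₀+k₁Λ₁+k₂Λ₂} = I_{kΛ₀} + U·x_{α₁}(-1)^{k₀+k₂+1}
+ U·x_{α₂}(-1)^{k₀+k₁+1} + U·x_{α₁+α₂}(-1)^{k₀+1} (with k = k₀+k₁+k₂). -/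
def Iwt (k k0 k1 k2 : ℕ) : Submodule U U :=
  IkL0 k ⊔ Submodule.span U {xg 0 (-1) ^ (k0 + k2 + 1)}
    ⊔ Submodule.span U {xg 1 (-1) ^ (k0 + k1 + 1)}
    ⊔ Submodule.span U {xg 2 (-1) ^ (k0 + 1)}

/-!
Right multiplication by `x_α(-1)` is a map of left `U(𝔫̄)`-modules, so it suffices to treat the
generators of `I_{kΛ₀}`. For `x_β(p)` with `p ≥ 0` the commutator is a multiple of
`x_{α₁+α₂}(p-1)`, which lies in `𝔫̄₊` or equals `x_{α₁+α₂}(-1)`. For `R^i_{-1,t}`, commuting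
`x_α(-1)` through it produces the same terms as commuting `x_α(0)` through `R^i_{-1,t+1}`, up to
terms containing the central factor `x_{α₁+α₂}(-1)`; and both `R^i_{-1,t+1} x_α(0)` and
`x_α(0) R^i_{-1,t+1}` lie in `I_{kΛ₀}`.
-/

section TupleProducts

variable {R : Type*} [Ring R]

theorem list_prod_ofFn_mul {n : ℕ} (Y Z : Fin n → R) (x : R)
    (h : ∀ l, Y l * x = x * Y l + Z l) :
    (List.ofFn Y).prod * x
      = x * (List.ofFn Y).prod + ∑ l, (List.ofFn (Function.update Y l (Z l))).prod := by
  induction n with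
  | zero => simp
  | succ n ih =>
    have hupd (l : Fin n) : (fun l' : Fin n => Function.update Y l.succ (Z l.succ) l'.succ)
        = Function.update (fun l' => Y l'.succ) l (Z l.succ) :=
      Function.update_comp_eq_of_injective Y (Fin.succ_injective n) l (Z l.succ)
    simp only [List.ofFn_succ, List.prod_cons, Fin.sum_univ_succ, Function.update_self,
      Function.update_of_ne (Fin.succ_ne_zero _), hupd]
    rw [mul_assoc, ih (fun l => Y l.succ) (fun l => Z l.succ) (fun l => h l.succ), mul_add,
      ← mul_assoc, h 0, Finset.mul_sum]
    noncomm_ring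

theorem list_prod_ofFn_update_mem_span_singleton {n : ℕ} (Y : Fin n → R) (l : Fin n) {w : R}
    (hw : ∀ u, Commute w u) :
    (List.ofFn (Function.update Y l w)).prod ∈ Submodule.span R {w} := by
  induction n with
  | zero => exact l.elim0
  | succ n ih =>
    rw [List.ofFn_succ, List.prod_cons]
    induction l using Fin.cases with
    | zero =>
      rw [Function.update_self, (hw _).eq]
      exact Submodule.smul_mem _ _ (Submodule.mem_span_singleton_self w)
    | succ l =>
      rw [Function.update_comp_eq_of_injective' Y (Fin.succ_injective n)]
      exact Submodule.smul_mem _ _ (ih _ l)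

theorem sum_antidiagonalTuple_add_single {M : Type*} [AddCommMonoid M] {n : ℕ} (s : ℕ)
    (l : Fin n) (F : (Fin n → ℕ) → M) :
    ∑ f ∈ Finset.Nat.antidiagonalTuple n s, F (f + Pi.single l 1)
      = ∑ g ∈ (Finset.Nat.antidiagonalTuple n (s + 1)).filter (fun g => g l ≠ 0), F g := by
  have hle {g : Fin n → ℕ} (hg : g l ≠ 0) : Pi.single l 1 ≤ g := fun i => by
    rcases eq_or_ne i l with rfl | hi
    · simpa [Nat.one_le_iff_ne_zero] using hg
    · simp [hi]
  refine Finset.sum_nbij' (· + Pi.single l 1) (· - Pi.single l 1) ?_ ?_ ?_ ?_ (fun _ _ => rfl)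
  · intro f hf
    simp_all [Finset.Nat.mem_antidiagonalTuple, Finset.sum_add_distrib]
  · intro g hg
    simp only [Finset.mem_filter, Finset.Nat.mem_antidiagonalTuple, Pi.sub_apply] at hg ⊢
    rw [Finset.sum_tsub_distrib _ fun i _ => hle hg.2 i, hg.1]
    simp
  · intro f _
    simp
  · intro g hg
    exact tsub_add_cancel_of_le (hle (Finset.mem_filter.1 hg).2)

def tupleProdSum (y : ℕ → R) (n s : ℕ) : R :=
  ∑ f ∈ Finset.Nat.antidiagonalTuple n s, (List.ofFn fun l => y (f l)).prod

/-- For a derivation `D` with `D (y m) = z m`, this is `D (tupleProdSum y n s)`. -/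
def tupleProdSumDeriv (y z : ℕ → R) (n s : ℕ) : R :=
  ∑ f ∈ Finset.Nat.antidiagonalTuple n s, ∑ l,
    (List.ofFn (Function.update (fun l' => y (f l')) l (z (f l)))).prod

theorem tupleProdSum_mul {y z : ℕ → R} {x : R} (h : ∀ m, y m * x = x * y m + z m) (n s : ℕ) :
    tupleProdSum y n s * x = x * tupleProdSum y n s + tupleProdSumDeriv y z n s := by
  simp only [tupleProdSum, tupleProdSumDeriv, Finset.sum_mul, Finset.mul_sum,
    ← Finset.sum_add_distrib]
  exact Finset.sum_congr rfl fun f _ => list_prod_ofFn_mul _ _ x fun l => h (f l)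

theorem tupleProdSumDeriv_succ (y z : ℕ → R) (n s : ℕ) :
    tupleProdSumDeriv y z n (s + 1) = tupleProdSumDeriv y (fun m => z (m + 1)) n s
      + ∑ l, ∑ g ∈ (Finset.Nat.antidiagonalTuple n (s + 1)).filter (fun g => g l = 0),
          (List.ofFn (Function.update (fun l' => y (g l')) l (z 0))).prod := by
  simp only [tupleProdSumDeriv]
  rw [Finset.sum_comm, Finset.sum_comm (s := Finset.Nat.antidiagonalTuple n s),
    ← Finset.sum_add_distrib]
  refine Finset.sum_congr rfl fun l _ => ?_
  rw [← Finset.sum_filter_not_add_sum_filter _ (fun g => g l = 0),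
    ← sum_antidiagonalTuple_add_single]
  congr 1
  · refine Finset.sum_congr rfl fun f _ => congrArg _ (congrArg _ (funext fun i => ?_))
    by_cases hi : i = l
    · subst hi; simp
    · simp [hi]
  · exact Finset.sum_congr rfl fun g hg => by rw [(Finset.mem_filter.1 hg).2]

theorem tupleProdSum_mul_mem_sup_span {I : Submodule R R} {y z : ℕ → R} {x x₀ : R} {n s : ℕ}
    (hx : ∀ m, y m * x = x * y m + z (m + 1)) (hx₀ : ∀ m, y m * x₀ = x₀ * y m + z m)
    (hz : ∀ u, Commute (z 0) u) (hs : tupleProdSum y n s ∈ I)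
    (hs' : tupleProdSum y n (s + 1) ∈ I) (h₀ : x₀ ∈ I) :
    tupleProdSum y n s * x ∈ I ⊔ Submodule.span R {z 0} := by
  set E := ∑ l, ∑ g ∈ (Finset.Nat.antidiagonalTuple n (s + 1)).filter (fun g => g l = 0),
    (List.ofFn (Function.update (fun l' => y (g l')) l (z 0))).prod
  have hE : E ∈ Submodule.span R {z 0} :=
    Submodule.sum_mem _ fun l _ => Submodule.sum_mem _ fun g _ =>
      list_prod_ofFn_update_mem_span_singleton _ l hz
  have key : tupleProdSum y n s * x = x * tupleProdSum y n s
      + (tupleProdSum y n (s + 1) * x₀ - x₀ * tupleProdSum y n (s + 1)) - E := by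
    rw [tupleProdSum_mul hx, tupleProdSum_mul hx₀, tupleProdSumDeriv_succ]
    abel
  rw [key]
  refine Submodule.sub_mem _ (Submodule.add_mem _ (Submodule.mem_sup_left ?_)
    (Submodule.mem_sup_left ?_)) (Submodule.mem_sup_right hE)
  · exact I.smul_mem x hs
  · exact I.sub_mem (I.smul_mem _ h₀) (I.smul_mem x₀ hs')

end TupleProducts

theorem UniversalEnvelopingAlgebra.commute_ι_of_forall_lie_eq_zero {R L : Type*} [CommRing R]
    [LieRing L] [LieAlgebra R L] {x : L} (hx : ∀ y : L, ⁅x, y⁆ = 0)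
    (u : UniversalEnvelopingAlgebra R L) : Commute (UniversalEnvelopingAlgebra.ι R x) u := by
  obtain ⟨u, rfl⟩ : ∃ t, UniversalEnvelopingAlgebra.mkAlgHom R L t = u :=
    RingCon.mkₐ_surjective (α := R) (UniversalEnvelopingAlgebra.ringCon R L) u
  induction u using TensorAlgebra.induction with
  | algebraMap r => rw [AlgHom.commutes]; exact (Algebra.commutes r _).symm
  | ι y =>
    have h := (UniversalEnvelopingAlgebra.ι R (L := L)).map_lie x y
    rw [hx, map_zero, Ring.lie_def, eq_comm, sub_eq_zero] at h
    exact h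
  | mul a b ha hb => rw [map_mul]; exact ha.mul_right hb
  | add a b ha hb => rw [map_add]; exact ha.add_right hb

theorem egen_lie_egen (a b : Fin 3) : ∃ c : ℂ, ⁅Egen a, Egen b⁆ = c • Egen 2 := by
  fin_cases a <;> fin_cases b <;>
    first
      | (refine ⟨0, ?_⟩; simp [Egen, Ring.lie_def, Matrix.single_mul_single_of_ne]; done)
      | (refine ⟨1, ?_⟩; simp [Egen, Ring.lie_def, Matrix.single_mul_single_of_ne]; done)
      | (refine ⟨-1, ?_⟩; simp [Egen, Ring.lie_def, Matrix.single_mul_single_of_ne])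

theorem egen_two_lie {Y : gl3} (hY : Y ∈ Submodule.span ℂ (Set.range Egen)) :
    ⁅Egen 2, Y⁆ = 0 := by
  suffices Submodule.span ℂ (Set.range Egen) ≤ LinearMap.ker (LieAlgebra.ad ℂ gl3 (Egen 2)) from
    this hY
  rw [Submodule.span_le]
  rintro _ ⟨b, rfl⟩
  fin_cases b <;> simp [Egen, Ring.lie_def, Matrix.single_mul_single_of_ne]

theorem en_lie_en (a b : Fin 3) : ∃ c : ℂ, ⁅en a, en b⁆ = c • en 2 := by
  obtain ⟨c, hc⟩ := egen_lie_egen a b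
  exact ⟨c, Subtype.ext hc⟩

theorem en_two_lie (y : nn) : ⁅en 2, y⁆ = 0 :=
  Subtype.ext (egen_two_lie y.2)

theorem nx_two_lie (q : ℤ) (v : nbar) : ⁅nx 2 q, v⁆ = 0 := by
  suffices LieAlgebra.ad ℂ nbar (nx 2 q) = 0 from LinearMap.congr_fun this v
  refine TensorProduct.ext' fun a y => ?_
  simp [nx, LieAlgebra.ExtendScalars.bracket_tmul, en_two_lie]

theorem xg_two_commute (q : ℤ) (u : U) : Commute (xg 2 q) u :=
  UniversalEnvelopingAlgebra.commute_ι_of_forall_lie_eq_zero (nx_two_lie q) u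

theorem xg_mul_xg (a b : Fin 3) :
    ∃ c : ℂ, ∀ q p : ℤ, xg a q * xg b p = xg b p * xg a q + c • xg 2 (q + p) := by
  obtain ⟨c, hc⟩ := en_lie_en a b
  refine ⟨c, fun q p => ?_⟩
  have h : c • xg 2 (q + p) = xg a q * xg b p - xg b p * xg a q := by
    have h := (UniversalEnvelopingAlgebra.ι ℂ (L := nbar)).map_lie (nx a q) (nx b p)
    rwa [nx, nx, LieAlgebra.ExtendScalars.bracket_tmul, ← LaurentPolynomial.T_add, hc,
      TensorProduct.tmul_smul, map_smul, Ring.lie_def] at h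
  rw [h]
  abel

theorem rtr_eq_tupleProdSum (k : ℕ) (i : Fin 2) (t : ℤ) :
    Rtr k i t = tupleProdSum (fun m : ℕ => xg i.castSucc (-1 - m)) (k + 1) (t - (k + 1)).toNat :=
  rfl

theorem rtr_mem_ikL0 {k : ℕ} (i : Fin 2) {t : ℤ} (ht : (k : ℤ) + 1 ≤ t) : Rtr k i t ∈ IkL0 k :=
  Submodule.mem_sup_left (Submodule.subset_span ⟨i, t, ht, rfl⟩)

theorem xg_mem_ikL0 (k : ℕ) (a : Fin 3) {p : ℤ} (hp : 0 ≤ p) : xg a p ∈ IkL0 k :=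
  Submodule.mem_sup_right (Submodule.subset_span ⟨a, p, hp, rfl⟩)

theorem rtr_mul_xg_mem {k : ℕ} (i : Fin 2) {t : ℤ} (ht : (k : ℤ) + 1 ≤ t) (j : Fin 3) :
    Rtr k i t * xg j (-1) ∈ IkL0 k ⊔ Submodule.span U {xg 2 (-1)} := by
  obtain ⟨c, hc⟩ := xg_mul_xg i.castSucc j
  have hs' : tupleProdSum (fun m : ℕ => xg i.castSucc (-1 - m)) (k + 1)
      ((t - (k + 1)).toNat + 1) = Rtr k i (t + 1) := by
    rw [rtr_eq_tupleProdSum]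
    congr 1
    omega
  have h := tupleProdSum_mul_mem_sup_span (z := fun m : ℕ => c • xg 2 (-1 - m))
    (x := xg j (-1)) (x₀ := xg j 0) (fun m => by rw [hc]; push_cast; ring_nf)
    (fun m => by rw [hc, add_zero])
    (fun u => (xg_two_commute _ u).smul_left c) (rtr_mem_ikL0 i ht)
    (hs' ▸ rtr_mem_ikL0 i (by omega)) (xg_mem_ikL0 k j le_rfl)
  rw [Nat.cast_zero, sub_zero, ← rtr_eq_tupleProdSum] at h
  exact sup_le_sup_left (Submodule.span_singleton_smul_le U c (xg 2 (-1))) (IkL0 k) h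

theorem xg_mul_xg_mem {k : ℕ} (a : Fin 3) {p : ℤ} (hp : 0 ≤ p) (j : Fin 3) :
    xg a p * xg j (-1) ∈ IkL0 k ⊔ Submodule.span U {xg 2 (-1)} := by
  obtain ⟨c, hc⟩ := xg_mul_xg a j
  have hz : xg 2 (p + -1) ∈ IkL0 k ⊔ Submodule.span U {xg 2 (-1)} := by
    rcases hp.eq_or_lt with rfl | hp
    · exact Submodule.mem_sup_right (Submodule.mem_span_singleton_self _)
    · exact Submodule.mem_sup_left (xg_mem_ikL0 k 2 (by omega))
  rw [hc]
  exact Submodule.add_mem _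
    (Submodule.mem_sup_left (Submodule.smul_mem _ _ (xg_mem_ikL0 k a hp)))
    (Submodule.smul_of_tower_mem _ c hz)

theorem mul_xg_mem_of_mem {k : ℕ} (j : Fin 3) {a : U}
    (ha : a ∈ IkL0 k ⊔ Submodule.span U {xg 2 (-1)}) :
    a * xg j (-1) ∈ IkL0 k ⊔ Submodule.span U {xg 2 (-1)} := by
  suffices IkL0 k ⊔ Submodule.span U {xg 2 (-1)} ≤ (IkL0 k ⊔ Submodule.span U {xg 2 (-1)}).comap
      (LinearMap.toSpanSingleton U U (xg j (-1))) from this ha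
  simp only [IkL0, Jid, nplusIdeal, sup_le_iff, Submodule.span_le]
  refine ⟨⟨?_, ?_⟩, ?_⟩
  · rintro _ ⟨i, t, ht, rfl⟩
    exact rtr_mul_xg_mem i ht j
  · rintro _ ⟨b, p, hp, rfl⟩
    exact xg_mul_xg_mem b hp j
  · rintro _ rfl
    simp only [SetLike.mem_coe, Submodule.mem_comap, LinearMap.toSpanSingleton_apply, smul_eq_mul]
    rw [(xg_two_commute (-1) _).eq]
    exact Submodule.mem_sup_right (Submodule.smul_mem _ _ (Submodule.mem_span_singleton_self _))

theorem statement2_general (k : ℕ) (j : Fin 2) (m : ℕ)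
    (a : U) (ha : a ∈ IkL0 k) :
    a * xg j.castSucc (-1) ^ m ∈ IkL0 k ⊔ Submodule.span U {xg 2 (-1)} := by
  induction m with
  | zero => simpa using Submodule.mem_sup_left ha
  | succ m ih => simpa only [pow_succ, ← mul_assoc] using mul_xg_mem_of_mem j.castSucc ih

/-- for j ∈ {1,2}, 0 ≤ m ≤ k and a ∈ I_{kΛ₀},
a·x_{α_j}(−1)^m ∈ I_{kΛ₀} + U(𝔫̄)·x_{α₁+α₂}(−1). -/
theorem statement2 (k : ℕ) (hk : 0 < k) (j : Fin 2) (m : ℕ) (hm : m ≤ k)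
    (a : U) (ha : a ∈ IkL0 k) :
    a * xg j.castSucc (-1) ^ m ∈ IkL0 k ⊔ Submodule.span U {xg 2 (-1)} :=
  statement2_general k j m a ha

end PrincipalSubspaceSL3
end
end

section
/- For all nonnegative integers k₀, k₁, k₂ with k₀+k₁+k₂ = k and every integer t ≥ k+1: τ_{λ₁}(R¹_{−1,t}) · x_{α₁}(−1)^{k₁} · x_{α₁+α₂}(−1)^{k₂} ∈ I_{k₂Λ₀+k₀Λ₁+k₁Λ₂}. -/
/- Setup: the nilpotent subalgebra 𝔫 ⊂ 𝔰𝔩(3,ℂ) spanned by E₁₂, E₂₃, E₁₃, its loop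
algebra 𝔫̄ = 𝔫 ⊗ ℂ[t,t⁻¹], and the universal enveloping algebra U(𝔫̄). -/

noncomputable section
open scoped TensorProduct

attribute [local instance 100] LieRing.ofAssociativeRing

theorem Finset.Nat.sum_antidiagonalTuple_add_card {M : Type*} [AddCommMonoid M] (k n : ℕ)
    (f : (Fin k → ℕ) → M) :
    ∑ g ∈ antidiagonalTuple k (n + k), f g =
      ∑ g ∈ antidiagonalTuple k n, f (g + 1) +
        ∑ g ∈ (antidiagonalTuple k (n + k)).filter (fun g => ∃ j, g j = 0), f g := by
  rw [← Finset.sum_filter_not_add_sum_filter _ (fun g => ∃ j, g j = 0)]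
  congr 1
  symm
  refine Finset.sum_nbij' (· + 1) (· - 1) ?_ ?_ ?_ ?_ (fun _ _ => rfl)
  · intro g hg
    simp only [mem_antidiagonalTuple, Finset.mem_filter] at hg ⊢
    simp [Finset.sum_add_distrib, hg]
  · intro g hg
    simp only [mem_antidiagonalTuple, Finset.mem_filter, not_exists] at hg ⊢
    have hpos : ∀ j, g j - 1 + 1 = g j := fun j => Nat.sub_add_cancel (Nat.pos_of_ne_zero (hg.2 j))
    have hsum : ∑ j, (g j - 1) + k = n + k := calc
      ∑ j, (g j - 1) + k = ∑ j, (g j - 1 + 1) := by simp [Finset.sum_add_distrib]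
      _ = ∑ j, g j := by simp only [hpos]
      _ = n + k := hg.1
    show ∑ j, (g j - 1) = n
    omega
  · intro g _
    funext j
    simp
  · intro g hg
    simp only [Finset.mem_filter, not_exists] at hg
    funext j
    exact Nat.sub_add_cancel (Nat.pos_of_ne_zero (hg.2 j))

theorem List.prod_ofFn_mem_span_singleton {R : Type*} [Ring R] {n : ℕ} (f : Fin n → R)
    (j : Fin n) (h : ∀ i, Commute (f i) (f j)) :
    (List.ofFn f).prod ∈ Submodule.span R {f j} := by
  induction n with
  | zero => exact j.elim0
  | succ n ih =>
    rw [List.ofFn_succ, List.prod_cons]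
    cases j using Fin.cases with
    | zero =>
      rw [(Commute.list_prod_right _ _ fun x hx => ?_).eq]
      · exact Submodule.smul_mem _ _ (Submodule.mem_span_singleton_self _)
      obtain ⟨i, rfl⟩ := List.mem_ofFn.mp hx
      exact (h i.succ).symm
    | succ j => exact Submodule.smul_mem _ (f 0) (ih (fun i => f i.succ) j fun i => h i.succ)

section LieOfAssociative

variable {R : Type*} [Ring R]

theorem Ring.mul_lie (a b c : R) : ⁅a * b, c⁆ = a * ⁅b, c⁆ + ⁅a, c⁆ * b := by
  simp only [Ring.lie_def]
  noncomm_ring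

theorem Ring.pow_succ_lie_of_commute {y D : R} (h : Commute y ⁅y, D⁆) (n : ℕ) :
    ⁅y ^ (n + 1), D⁆ = (n + 1) • (⁅y, D⁆ * y ^ n) := by
  induction n with
  | zero => simp
  | succ n ih =>
    rw [pow_succ, Ring.mul_lie, ih, (h.pow_left (n + 1)).eq, smul_mul_assoc, mul_assoc,
      ← pow_succ, succ_nsmul' _ (n + 1)]

theorem Ring.lie_pow_mul_pow_mem {K : Type*} [Field K] [CharZero K] [Algebra K R]
    {I : Submodule R R} {y D : R} (hI : ∀ u ∈ I, ⁅u, D⁆ ∈ I) (hy : Commute y ⁅y, D⁆)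
    (hD : Commute ⁅y, D⁆ D) (a b : ℕ) (hab : y ^ (a + b) ∈ I) : ⁅y, D⁆ ^ a * y ^ b ∈ I := by
  induction a generalizing b with
  | zero => simpa using hab
  | succ a ih =>
    have hprev : ⁅y, D⁆ ^ a * y ^ (b + 1) ∈ I := ih (b + 1) (by rwa [← add_assoc, add_right_comm])
    have hlie : ⁅⁅y, D⁆ ^ a * y ^ (b + 1), D⁆ = ((b + 1 : ℕ) : K) • (⁅y, D⁆ ^ (a + 1) * y ^ b) := by
      rw [Ring.mul_lie, Ring.pow_succ_lie_of_commute hy, (commute_iff_lie_eq.mp (hD.pow_left a)),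
        zero_mul, add_zero, mul_smul_comm, ← mul_assoc, ← pow_succ, Nat.cast_smul_eq_nsmul]
    have hb : ((b + 1 : ℕ) : K) ≠ 0 := Nat.cast_ne_zero.mpr b.succ_ne_zero
    have hmem := Submodule.smul_of_tower_mem I ((b + 1 : ℕ) : K)⁻¹ (hI _ hprev)
    rwa [hlie, smul_smul, inv_mul_cancel₀ hb, one_smul] at hmem

end LieOfAssociative

namespace PrincipalSubspaceSL3

theorem en_lie_en_zero_one : ⁅en 0, en 1⁆ = en 2 := by
  apply Subtype.ext
  simp [en, Egen, Ring.lie_def]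

theorem en_lie_en_zero_two : ⁅en 0, en 2⁆ = 0 := by
  apply Subtype.ext
  simp [en, Egen, Ring.lie_def]

theorem en_lie_en_one_two : ⁅en 1, en 2⁆ = 0 := by
  apply Subtype.ext
  simp [en, Egen, Ring.lie_def]

theorem xg_lie_xg (i j : Fin 3) (m p : ℤ) :
    ⁅xg i m, xg j p⁆ =
      UniversalEnvelopingAlgebra.ι ℂ (LaurentPolynomial.T (m + p) ⊗ₜ ⁅en i, en j⁆) := by
  rw [xg, xg, ← LieHom.map_lie, nx, nx, LieAlgebra.ExtendScalars.bracket_tmul,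
    LaurentPolynomial.T_add]

theorem xg_zero_lie_xg_one (m p : ℤ) : ⁅xg 0 m, xg 1 p⁆ = xg 2 (m + p) := by
  rw [xg_lie_xg, en_lie_en_zero_one, xg, nx]

theorem commute_xg_of_lie_en_eq_zero {i j : Fin 3} (h : ⁅en i, en j⁆ = 0) (m p : ℤ) :
    Commute (xg i m) (xg j p) := by
  rw [commute_iff_lie_eq, xg_lie_xg, h, TensorProduct.tmul_zero, map_zero]

theorem commute_xg_zero_xg_zero (m p : ℤ) : Commute (xg 0 m) (xg 0 p) :=
  commute_xg_of_lie_en_eq_zero (lie_self _) m p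

theorem commute_xg_zero_xg_two (m p : ℤ) : Commute (xg 0 m) (xg 2 p) :=
  commute_xg_of_lie_en_eq_zero en_lie_en_zero_two m p

theorem commute_xg_one_xg_two (m p : ℤ) : Commute (xg 1 m) (xg 2 p) :=
  commute_xg_of_lie_en_eq_zero en_lie_en_one_two m p

section Ideal

variable {k k0 k1 k2 : ℕ}

theorem IkL0_le_Iwt : IkL0 k ≤ Iwt k k0 k1 k2 :=
  le_sup_left.trans (le_sup_left.trans le_sup_left)

theorem Rtr_mem_Iwt (i : Fin 2) {t : ℤ} (ht : (k : ℤ) + 1 ≤ t) : Rtr k i t ∈ Iwt k k0 k1 k2 :=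
  IkL0_le_Iwt (Submodule.mem_sup_left (Submodule.subset_span ⟨i, t, ht, rfl⟩))

theorem mul_xg_mem_Iwt (u : U) (i : Fin 3) {m : ℤ} (hm : 0 ≤ m) : u * xg i m ∈ Iwt k k0 k1 k2 :=
  IkL0_le_Iwt (Submodule.mem_sup_right
    (Submodule.smul_mem _ u (Submodule.subset_span ⟨i, m, hm, rfl⟩)))

theorem lie_xg_mem_Iwt {u : U} (hu : u ∈ Iwt k k0 k1 k2) (i : Fin 3) {m : ℤ} (hm : 0 ≤ m) :
    ⁅u, xg i m⁆ ∈ Iwt k k0 k1 k2 := by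
  rw [Ring.lie_def]
  exact Submodule.sub_mem _ (mul_xg_mem_Iwt u i hm) (Submodule.smul_mem _ _ hu)

theorem xg_zero_pow_mem_Iwt : xg 0 (-1) ^ (k0 + k2 + 1) ∈ Iwt k k0 k1 k2 :=
  Submodule.mem_sup_left (Submodule.mem_sup_left
    (Submodule.mem_sup_right (Submodule.mem_span_singleton_self _)))

theorem xg_two_pow_mul_xg_zero_pow_mem_Iwt :
    xg 2 (-1) ^ k0 * xg 0 (-1) ^ (k2 + 1) ∈ Iwt k k0 k1 k2 := by
  have hlie : ⁅xg 0 (-1), xg 1 0⁆ = xg 2 (-1) := xg_zero_lie_xg_one _ _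
  rw [← hlie]
  refine Ring.lie_pow_mul_pow_mem (K := ℂ) (fun u hu => lie_xg_mem_Iwt hu 1 le_rfl) ?_ ?_
    k0 (k2 + 1) xg_zero_pow_mem_Iwt
  · rw [hlie]
    exact commute_xg_zero_xg_two _ _
  · rw [hlie]
    exact (commute_xg_one_xg_two _ _).symm

end Ideal

def xMonomial {n : ℕ} (g : Fin n → ℕ) : U :=
  (List.ofFn fun j => xg 0 (-1 - (g j : ℤ))).prod

theorem Rtr_zero_eq (k : ℕ) (t : ℤ) :
    Rtr k 0 t = ∑ g ∈ Finset.Nat.antidiagonalTuple (k + 1) (t - (k + 1)).toNat, xMonomial g :=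
  rfl

theorem xMonomial_mem_span {n : ℕ} {g : Fin n → ℕ} {j : Fin n} (hj : g j = 0) :
    xMonomial g ∈ Submodule.span U {xg 0 (-1)} := by
  have hspan := List.prod_ofFn_mem_span_singleton (fun j => xg 0 (-1 - (g j : ℤ))) j
    fun i => commute_xg_zero_xg_zero _ _
  simp only [hj, Nat.cast_zero, sub_zero] at hspan
  exact hspan

theorem Rtr_zero_commute (k : ℕ) (t : ℤ) {w : U} (h : ∀ m, Commute (xg 0 m) w) :
    Commute (Rtr k 0 t) w :=
  Commute.sum_left _ _ _ fun _ _ => Commute.list_prod_left _ _ fun x hx => by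
    obtain ⟨j, rfl⟩ := List.mem_ofFn.mp hx
    exact h _

theorem sub_map_Rtr_zero_mem_span {F : Type*} [FunLike F U U] [RingHomClass F U U] (τ : F)
    (hτ : ∀ m : ℤ, τ (xg 0 m) = xg 0 (m - 1)) (k : ℕ) {t : ℤ} (ht : (k : ℤ) + 1 ≤ t) :
    Rtr k 0 (t + (k + 1)) - τ (Rtr k 0 t) ∈ Submodule.span U {xg 0 (-1)} := by
  obtain ⟨s, rfl⟩ : ∃ s : ℕ, t = s + (k + 1) := ⟨(t - (k + 1)).toNat, by omega⟩
  have hτx : ∀ g : Fin (k + 1) → ℕ, τ (xMonomial g) = xMonomial (g + 1) := by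
    intro g
    simp only [xMonomial, map_list_prod, List.map_ofFn, Function.comp_def, hτ, Pi.add_apply,
      Pi.one_apply, Nat.cast_add, Nat.cast_one]
    refine congrArg List.prod (congrArg List.ofFn (funext fun j => congrArg (xg 0) ?_))
    ring
  have hs : (s + (k + 1 : ℤ) - (k + 1)).toNat = s := by omega
  have hs' : (s + (k + 1 : ℤ) + (k + 1) - (k + 1)).toNat = s + (k + 1) := by omega
  rw [Rtr_zero_eq, Rtr_zero_eq, hs, hs', map_sum, Finset.Nat.sum_antidiagonalTuple_add_card]
  simp only [hτx, add_sub_cancel_left]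
  refine Submodule.sum_mem _ fun g hg => ?_
  obtain ⟨j, hj⟩ := (Finset.mem_filter.mp hg).2
  exact xMonomial_mem_span hj

theorem statement10_general (k : ℕ) (τ : U ≃ₐ[ℂ] U)
    (hτ1 : ∀ m : ℤ, τ (xg 0 m) = xg 0 (m - 1))
    (k0 k1 k2 : ℕ)
    (t : ℤ) (ht : (k : ℤ) + 1 ≤ t) :
    τ (Rtr k 0 t) * xg 0 (-1) ^ k1 * xg 2 (-1) ^ k2 ∈ Iwt k k2 k0 k1 := by
  obtain ⟨S, hS⟩ := Submodule.mem_span_singleton.mp (sub_map_Rtr_zero_mem_span τ hτ1 k ht)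
  have hτR : τ (Rtr k 0 t) = Rtr k 0 (t + (k + 1)) - S * xg 0 (-1) := by
    rw [← smul_eq_mul, hS, sub_sub_cancel]
  have hmain : Rtr k 0 (t + (k + 1)) * xg 0 (-1) ^ k1 * xg 2 (-1) ^ k2 ∈ Iwt k k2 k0 k1 := by
    rw [mul_assoc, (Rtr_zero_commute k _ fun m =>
      ((commute_xg_zero_xg_zero m _).pow_right k1).mul_right
        ((commute_xg_zero_xg_two m _).pow_right k2)).eq]
    exact Submodule.smul_mem _ _ (Rtr_mem_Iwt 0 (by omega))
  have hcorr : S * xg 0 (-1) * xg 0 (-1) ^ k1 * xg 2 (-1) ^ k2 ∈ Iwt k k2 k0 k1 := by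
    rw [mul_assoc S, ← pow_succ', mul_assoc,
      ((commute_xg_zero_xg_two _ _).pow_pow (k1 + 1) k2).eq]
    exact Submodule.smul_mem _ _ xg_two_pow_mul_xg_zero_pow_mem_Iwt
  rw [hτR, sub_mul, sub_mul]
  exact Submodule.sub_mem _ hmain hcorr

/-- for k₀+k₁+k₂ = k and t ≥ k+1,
τ_{λ₁}(R¹_{−1,t})·x_{α₁}(−1)^{k₁}·x_{α₁+α₂}(−1)^{k₂} ∈ I_{k₂Λ₀+k₀Λ₁+k₁Λ₂},
where τ_{λ₁} is the automorphism of U(𝔫̄) with x_{α₁}(m) ↦ x_{α₁}(m−1),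
x_{α₂}(m) ↦ x_{α₂}(m), x_{α₁+α₂}(m) ↦ x_{α₁+α₂}(m−1). -/
theorem statement10 (k : ℕ) (hk : 0 < k) (τ : U ≃ₐ[ℂ] U)
    (hτ1 : ∀ m : ℤ, τ (xg 0 m) = xg 0 (m - 1))
    (hτ2 : ∀ m : ℤ, τ (xg 1 m) = xg 1 m)
    (hτ3 : ∀ m : ℤ, τ (xg 2 m) = xg 2 (m - 1))
    (k0 k1 k2 : ℕ) (hsum : k0 + k1 + k2 = k)
    (t : ℤ) (ht : (k : ℤ) + 1 ≤ t) :
    τ (Rtr k 0 t) * xg 0 (-1) ^ k1 * xg 2 (-1) ^ k2 ∈ Iwt k k2 k0 k1 :=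
  statement10_general k τ hτ1 k0 k1 k2 t ht

end PrincipalSubspaceSL3
end
end
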